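/- Let (X,r) be an indecomposable solution with Dehornoy class m. Then for every x ∈ X, m is the least positive integer l with π_l(x) = Id; in particular this least integer is the same for all x ∈ X. -/

import Mathlib

/-!
Write `π_l(x)` for `S.sigmaCab l x`. Unfolding the first component of the braid relation `l` times
gives `σ_y ∘ π_l(x) = π_l(σ_y x) ∘ σ_c` with `c = τ_{U^{l-1}(x)} ⋯ τ_x (y)`, and involutivity gives
`π_l(σ_y x)(c) = y`. If `π_l(x) = Id`, evaluating the first identity at `U(c)` yields
`σ_y(U c) = y = σ_y(U y)`, so `c = y` and then `π_l(σ_y x) = Id`. Thus `{x | π_l(x) = Id}` is mapped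
into itself by every `σ_y`; as `X` is finite it is stable under `𝒢(X,r)`, hence by transitivity it
is empty or all of `X`.
-/

open Function

variable {X : Type*}

/-- The map `r(x,y) = (σ_x(y), τ_y(x))` built from two families of bijections. -/
def ybR (σ τ : X → Equiv.Perm X) : X × X → X × X :=
  fun p => (σ p.1 p.2, τ p.2 p.1)

/-- Apply a map `X × X → X × X` to the first two coordinates of a triple (`r × id`). -/
def lmap (r : X × X → X × X) : X × X × X → X × X × X :=
  fun p => ((r (p.1, p.2.1)).1, ((r (p.1, p.2.1)).2, p.2.2))

/-- Apply a map `X × X → X × X` to the last two coordinates of a triple (`id × r`). -/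
def rmap (r : X × X → X × X) : X × X × X → X × X × X :=
  fun p => (p.1, r p.2)

/-- A finite non-degenerate involutive set-theoretic solution of the Yang--Baxter
equation on a finite set `X` with `|X| > 1`. -/
structure YBSolution (X : Type*) [Fintype X] where
  σ : X → Equiv.Perm X
  τ : X → Equiv.Perm X
  card_gt_one : 1 < Fintype.card X
  involutive : ∀ p : X × X, ybR σ τ (ybR σ τ p) = p
  braid : lmap (ybR σ τ) ∘ rmap (ybR σ τ) ∘ lmap (ybR σ τ)
        = rmap (ybR σ τ) ∘ lmap (ybR σ τ) ∘ rmap (ybR σ τ)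

namespace YBSolution

variable [Fintype X]

/-- The diagonal map `T(x) = τ_x⁻¹(x)`. -/
def T (S : YBSolution X) (x : X) : X := (S.τ x).symm x

/-- The map `U(x) = σ_x⁻¹(x)`, the inverse of the diagonal map. -/
def U (S : YBSolution X) (x : X) : X := (S.σ x).symm x

/-- The `k`-cabled sigma maps (also denoted `π_k`):
`σ^{(k)}_x = σ_x ∘ σ_{U(x)} ∘ ⋯ ∘ σ_{U^{k-1}(x)}`. -/
def sigmaCab (S : YBSolution X) : ℕ → X → X → X
  | 0, _ => id
  | k + 1, x => ⇑(S.σ x) ∘ S.sigmaCab k (S.U x)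

/-- The composition `τ_{U^{k-1}(y)} ∘ ⋯ ∘ τ_{U(y)} ∘ τ_y`. -/
def tauChain (S : YBSolution X) : ℕ → X → X → X
  | 0, _ => id
  | k + 1, y => S.tauChain k (S.U y) ∘ ⇑(S.τ y)

/-- The `k`-cabled tau maps:
`τ^{(k)}_y = T^{k-1} ∘ τ_{U^{k-1}(y)} ∘ ⋯ ∘ τ_{U(y)} ∘ τ_y ∘ T^{-(k-1)}`,
where `T^{-(k-1)} = U^{k-1}` since `U` is the inverse of `T`. -/
def tauCab (S : YBSolution X) (k : ℕ) (y : X) : X → X :=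
  S.T^[k - 1] ∘ S.tauChain k y ∘ S.U^[k - 1]

/-- The `k`-cabled solution `r^{(k)}(x,y) = (σ^{(k)}_x(y), τ^{(k)}_y(x))`. -/
def rCab (S : YBSolution X) (k : ℕ) : X × X → X × X :=
  fun p => (S.sigmaCab k p.1 p.2, S.tauCab k p.2 p.1)

/-- The permutation group `𝒢(X,r)`, generated by the `σ_x`. -/
def G (S : YBSolution X) : Subgroup (Equiv.Perm X) :=
  Subgroup.closure (Set.range S.σ)

/-- The permutation group `𝒢(X,r^{(k)})` of the `k`-cabled solution,
generated by the `σ^{(k)}_x`. -/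
def Gcab (S : YBSolution X) (k : ℕ) : Subgroup (Equiv.Perm X) :=
  Subgroup.closure {g : Equiv.Perm X | ∃ x : X, ⇑g = S.sigmaCab k x}

/-- The orbit of `x` under the diagonal map `T`. -/
def Torbit (S : YBSolution X) (x : X) : Set X := {y | ∃ n : ℕ, S.T^[n] x = y}

/-- The orbit of `x` under `𝒢(X,r)`. -/
def Gorbit (S : YBSolution X) (x : X) : Set X := {y | ∃ g ∈ S.G, g x = y}

/-- The orbit of `x` under `𝒢(X,r^{(k)})`. -/
def GcabOrbit (S : YBSolution X) (k : ℕ) (x : X) : Set X :=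
  {y | ∃ g ∈ S.Gcab k, g x = y}

/-- A solution is indecomposable when `𝒢(X,r)` acts transitively on `X`. -/
def IsIndecomposable (S : YBSolution X) : Prop := ∀ x y : X, ∃ g ∈ S.G, g x = y

end YBSolution

open Pointwise

namespace YBSolution

variable [Fintype X] (S : YBSolution X)

lemma braid_fst (x y z : X) : S.σ (S.σ x y) (S.σ (S.τ y x) z) = S.σ x (S.σ y z) := by
  have h := congrFun S.braid (x, y, z)
  simp only [Function.comp, lmap, rmap, ybR, Prod.mk.injEq] at h
  exact h.1

lemma involutive_fst (x y : X) : S.σ (S.σ x y) (S.τ y x) = x :=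
  congrArg Prod.fst (S.involutive (x, y))

lemma σ_U (x : X) : S.σ x (S.U x) = x := (S.σ x).apply_symm_apply x

lemma T_U (x : X) : S.T (S.U x) = x := by
  have hinv := S.involutive_fst x (S.U x)
  rw [S.σ_U] at hinv
  have hτ : S.τ (S.U x) x = S.U x := (S.σ x).injective (by rw [hinv, S.σ_U])
  rw [T, Equiv.symm_apply_eq, hτ]

lemma U_injective : Function.Injective S.U := Function.LeftInverse.injective S.T_U

lemma U_σ (x y : X) : S.U (S.σ y x) = S.σ (S.τ x y) (S.U x) :=
  (S.σ (S.σ y x)).injective (by rw [S.σ_U, S.braid_fst, S.σ_U])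

lemma σ_sigmaCab (l : ℕ) (x y z : X) :
    S.σ y (S.sigmaCab l x z) = S.sigmaCab l (S.σ y x) (S.σ (S.tauChain l x y) z) := by
  induction l generalizing x y with
  | zero => rfl
  | succ l ih =>
    change S.σ y (S.σ x (S.sigmaCab l (S.U x) z)) = _
    rw [← S.braid_fst y x, ih (S.U x) (S.τ x y), ← S.U_σ]
    rfl

lemma sigmaCab_tauChain (l : ℕ) (x y : X) :
    S.sigmaCab l (S.σ y x) (S.tauChain l x y) = y := by
  induction l generalizing x y with
  | zero => rfl
  | succ l ih =>
    change S.σ (S.σ y x) (S.sigmaCab l (S.U (S.σ y x)) (S.tauChain l (S.U x) (S.τ x y))) = y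
    rw [S.U_σ, ih (S.U x) (S.τ x y), S.involutive_fst]

variable {S}

lemma tauChain_apply_of_sigmaCab_eq_id {l : ℕ} {x : X} (h : S.sigmaCab l x = id) (y : X) :
    S.tauChain l x y = y := by
  set c := S.tauChain l x y
  have hc : S.σ y (S.U c) = y := by
    have hcomm := S.σ_sigmaCab l x y (S.U c)
    rwa [h, id_eq, S.σ_U, S.sigmaCab_tauChain] at hcomm
  exact S.U_injective ((S.σ y).injective (hc.trans (S.σ_U y).symm))

lemma sigmaCab_σ_eq_id {l : ℕ} {x : X} (h : S.sigmaCab l x = id) (y : X) :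
    S.sigmaCab l (S.σ y x) = id := by
  funext w
  have hw := S.σ_sigmaCab l x y ((S.σ y).symm w)
  rw [h, tauChain_apply_of_sigmaCab_eq_id h] at hw
  simpa using hw.symm

lemma sigmaCab_eq_id_of_mem_G {l : ℕ} {g : Equiv.Perm X} (hg : g ∈ S.G) {x : X}
    (h : S.sigmaCab l x = id) : S.sigmaCab l (g x) = id := by
  set s : Set X := {x | S.sigmaCab l x = id}
  have hG : S.G ≤ MulAction.stabilizer (Equiv.Perm X) s := by
    refine (Subgroup.closure_le _).2 ?_
    rintro _ ⟨y, rfl⟩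
    exact (MulAction.mem_stabilizer_set_iff_smul_set_subset s.toFinite).2
      (Set.smul_set_subset_iff.2 fun _ hx => sigmaCab_σ_eq_id hx y)
  change g x ∈ s
  rw [← MulAction.mem_stabilizer_iff.1 (hG hg)]
  exact Set.smul_mem_smul_set h

lemma IsIndecomposable.sigmaCab_eq_id {l : ℕ} (hind : S.IsIndecomposable) {x : X}
    (h : S.sigmaCab l x = id) (y : X) : S.sigmaCab l y = id := by
  obtain ⟨g, hg, rfl⟩ := hind x y
  exact sigmaCab_eq_id_of_mem_G hg h

end YBSolution

/-- for an indecomposable solution with Dehornoy class `m`, for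
every `x` the least positive `l` with `π_l(x) = Id` is exactly `m`. -/
theorem dehornoy_class_indecomposable [Fintype X] (S : YBSolution X)
    (hind : S.IsIndecomposable) (m : ℕ)
    (hm : IsLeast {m : ℕ | 0 < m ∧ ∀ x : X, S.sigmaCab m x = id} m) :
    ∀ x : X, IsLeast {l : ℕ | 0 < l ∧ S.sigmaCab l x = id} m :=
  fun x => ⟨⟨hm.1.1, hm.1.2 x⟩, fun _ ⟨hl, hlx⟩ => hm.2 ⟨hl, hind.sigmaCab_eq_id hlx⟩⟩
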